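/- arXiv:1710.00798 — 3 statements merged into one kernel-verified Lean document; each statement's English description precedes it below -/
import Mathlib

section
/- Let Ω ⊆ ℝ^d be open and bounded and V a real Banach space with topological dual V*. If u : Ω → V is weakly measurable (i.e., x ↦ ⟨q, u(x)⟩ is Lebesgue-measurable for every q ∈ V*) and p : Ω → V* is weak*-continuous (i.e., for every v ∈ V the map x ↦ ⟨p(x), v⟩ is continuous), then the map x ↦ ⟨p(x), u(x)⟩ is Lebesgue-measurable on Ω. -/
open MeasureTheory TopologicalSpace

/- `(y, x) ↦ ⟨p y, u x⟩` is a Carathéodory function (continuous in `y`, measurable in `x`),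
hence jointly measurable; restrict it to the diagonal. -/
theorem Measurable.strongDual_apply_of_continuous {𝕜 X V : Type*} [NontriviallyNormedField 𝕜]
    [MeasurableSpace 𝕜] [BorelSpace 𝕜] [TopologicalSpace X] [MetrizableSpace X]
    [SecondCountableTopology X] [MeasurableSpace X] [OpensMeasurableSpace X]
    [NormedAddCommGroup V] [NormedSpace 𝕜 V] {u : X → V} {p : X → StrongDual 𝕜 V}
    (hu : ∀ q : StrongDual 𝕜 V, Measurable fun x => q (u x))
    (hp : ∀ v : V, Continuous fun x => p x v) :
    Measurable fun x => p x (u x) :=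
  (measurable_uncurry_of_continuous_of_measurable (u := fun y x => p y (u x))
    (fun x => hp (u x)) (fun y => hu (p y))).comp (measurable_id.prodMk measurable_id)

theorem stmt0_general {d : ℕ} (Ω : Set (EuclideanSpace ℝ (Fin d)))
    (V : Type*) [NormedAddCommGroup V] [NormedSpace ℝ V]
    (u : Ω → V) (p : Ω → StrongDual ℝ V)
    (hu : ∀ q : StrongDual ℝ V, Measurable fun x : Ω => q (u x))
    (hp : ∀ v : V, Continuous fun x : Ω => p x v) :
    Measurable fun x : Ω => p x (u x) :=
  Measurable.strongDual_apply_of_continuous hu hp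

/-- Let `Ω ⊆ ℝ^d` be open and bounded and `V` a real Banach space with
topological dual `V*`. If `u : Ω → V` is weakly measurable (i.e. `x ↦ ⟨q, u x⟩` is measurable
for every `q ∈ V*`) and `p : Ω → V*` is weak*-continuous (i.e. for every `v ∈ V` the map
`x ↦ ⟨p x, v⟩` is continuous), then `x ↦ ⟨p x, u x⟩` is measurable on `Ω`. -/
theorem stmt0 {d : ℕ} (Ω : Set (EuclideanSpace ℝ (Fin d)))
    (hΩo : IsOpen Ω) (hΩb : Bornology.IsBounded Ω)
    (V : Type*) [NormedAddCommGroup V] [NormedSpace ℝ V] [CompleteSpace V]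
    (u : Ω → V) (p : Ω → StrongDual ℝ V)
    (hu : ∀ q : StrongDual ℝ V, Measurable fun x : Ω => q (u x))
    (hp : ∀ v : V, Continuous fun x : Ω => p x v) :
    Measurable fun x : Ω => p x (u x) :=
  stmt0_general Ω V u p hu hp
end

section
/- Let Ω ⊆ ℝ^d be open and bounded, V a real Banach space, and ‖·‖_{(V*)^d} a norm on (V*)^d satisfying the rotational invariance property ‖p‖_{(V*)^d} = ‖Rp‖_{(V*)^d} for all p ∈ (V*)^d and all R ∈ SO(d), where (Rp)_i := Σ_{j=1}^d R_{ij} p_j ∈ V*. Then TV_V is rotationally invariant: for every u ∈ L_w^∞(Ω, V), every R ∈ SO(d), and ũ : R^TΩ → V defined by ũ(x) := u(Rx), one has TV_V(u) = TV_V(ũ) (with TV_V(ũ) computed over the rotated domain R^TΩ := { R^T x : x ∈ Ω }). -/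
open MeasureTheory ENNReal Matrix

/-- The divergence `div p (x) = ∑ i, ∂_i p_i (x) ∈ V*` of `p : Ω → (V*)^d`. -/
noncomputable def divD {d : ℕ} {W : Type*} [NormedAddCommGroup W] [NormedSpace ℝ W]
    (p : EuclideanSpace ℝ (Fin d) → Fin d → W) (x : EuclideanSpace ℝ (Fin d)) : W :=
  ∑ i, fderiv ℝ (fun y => p y i) x (EuclideanSpace.single i 1)

/-- The total variation of a Banach space-valued function `u` on the domain `Ω ⊆ ℝ^d`,
relative to a given (product) norm `N` on `(V*)^d`:
`TV_V(u) = sup { ∫_Ω ⟨−div p(x), u(x)⟩ dx : p ∈ C¹_c(Ω,(V*)^d), N (p x) ≤ 1 ∀ x }`. -/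
noncomputable def TVb {d : ℕ} {V : Type*} [NormedAddCommGroup V] [NormedSpace ℝ V]
    (N : (Fin d → StrongDual ℝ V) → ℝ)
    (Ω : Set (EuclideanSpace ℝ (Fin d))) (u : EuclideanSpace ℝ (Fin d) → V) : ℝ :=
  sSup { r : ℝ | ∃ p : EuclideanSpace ℝ (Fin d) → Fin d → StrongDual ℝ V,
    ContDiff ℝ 1 p ∧ HasCompactSupport p ∧ tsupport p ⊆ Ω ∧
    (∀ x : EuclideanSpace ℝ (Fin d), N (p x) ≤ 1) ∧
    r = ∫ x in Ω, -(divD p x (u x)) }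

/-- The action of a matrix `R` on a vector `x ∈ ℝ^d`. -/
noncomputable def matVec {d : ℕ} (R : Matrix (Fin d) (Fin d) ℝ)
    (x : EuclideanSpace ℝ (Fin d)) : EuclideanSpace ℝ (Fin d) :=
  (EuclideanSpace.equiv (Fin d) ℝ).symm (R.mulVec (EuclideanSpace.equiv (Fin d) ℝ x))

/-!
A rotation `S` carries a test field `p` on `Ω` to the field `y ↦ Sᵀ p(S y)` on
`S⁻¹ Ω = Sᵀ Ω`. It is again admissible because the norm on `(V*)^d` is rotation invariant;
by the chain rule and `S Sᵀ = 1` its divergence at `y` is `(div p)(S y)`; and since `det S = 1`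
the substitution `x = S y` preserves Lebesgue measure, so the two integrals agree. Hence the
two total variations are suprema of the same set of integrals.
-/

section
variable {d : ℕ}

noncomputable def matVecCLM (S : Matrix (Fin d) (Fin d) ℝ) :
    EuclideanSpace ℝ (Fin d) →L[ℝ] EuclideanSpace ℝ (Fin d) :=
  toEuclideanCLM (n := Fin d) (𝕜 := ℝ) S

lemma coe_matVecCLM (S : Matrix (Fin d) (Fin d) ℝ) : ⇑(matVecCLM S) = matVec S :=
  funext fun _ => rfl

lemma matVec_matVec (S T : Matrix (Fin d) (Fin d) ℝ) (x : EuclideanSpace ℝ (Fin d)) :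
    matVec S (matVec T x) = matVec (S * T) x := by
  simp [← coe_matVecCLM, matVecCLM, map_mul]

lemma matVec_one : matVec (1 : Matrix (Fin d) (Fin d) ℝ) = id := by
  simp [← coe_matVecCLM, matVecCLM, map_one]

lemma leftInverse_matVec {S T : Matrix (Fin d) (Fin d) ℝ} (hTS : T * S = 1) :
    Function.LeftInverse (matVec T) (matVec S) := fun x => by
  rw [matVec_matVec, hTS, matVec_one, id]

lemma det_toEuclideanLin (S : Matrix (Fin d) (Fin d) ℝ) :
    LinearMap.det (toEuclideanLin S : EuclideanSpace ℝ (Fin d) →ₗ[ℝ] _) = S.det := by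
  rw [toEuclideanLin_eq_toLin_orthonormal, LinearMap.det_toLin]

lemma measurePreserving_matVec {S : Matrix (Fin d) (Fin d) ℝ} (hS : |S.det| = 1) :
    MeasurePreserving (matVec S) := by
  refine ⟨coe_matVecCLM S ▸ (matVecCLM S).continuous.measurable, ?_⟩
  have := Measure.map_linearMap_addHaar_eq_smul_addHaar volume
    (f := (toEuclideanLin S : EuclideanSpace ℝ (Fin d) →ₗ[ℝ] _))
    (by rw [det_toEuclideanLin]; exact abs_ne_zero.mp (by rw [hS]; norm_num))
  rwa [det_toEuclideanLin, abs_inv, hS, inv_one, ENNReal.ofReal_one, one_smul,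
    ← coe_toEuclideanCLM_eq_toEuclideanLin, ContinuousLinearMap.coe_coe,
    ← matVecCLM, coe_matVecCLM] at this

lemma matVec_single (S : Matrix (Fin d) (Fin d) ℝ) (i : Fin d) :
    matVec S (EuclideanSpace.single i 1) = ∑ k, S k i • EuclideanSpace.single k 1 := by
  ext k
  simp [matVec, Matrix.mulVec, dotProduct, Pi.single_apply]

noncomputable def matVecEquiv {S T : Matrix (Fin d) (Fin d) ℝ} (hST : S * T = 1)
    (hTS : T * S = 1) : EuclideanSpace ℝ (Fin d) ≃L[ℝ] EuclideanSpace ℝ (Fin d) :=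
  ContinuousLinearEquiv.equivOfInverse (matVecCLM S) (matVecCLM T)
    (by rw [coe_matVecCLM, coe_matVecCLM]; exact leftInverse_matVec hTS)
    (by rw [coe_matVecCLM, coe_matVecCLM]; exact leftInverse_matVec hST)

lemma coe_matVecEquiv {S T : Matrix (Fin d) (Fin d) ℝ} (hST : S * T = 1) (hTS : T * S = 1) :
    ⇑(matVecEquiv hST hTS) = matVec S :=
  coe_matVecCLM S

variable {W : Type*} [NormedAddCommGroup W] [NormedSpace ℝ W]

noncomputable def matSmul (S : Matrix (Fin d) (Fin d) ℝ) : (Fin d → W) →L[ℝ] (Fin d → W) :=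
  ContinuousLinearMap.pi fun i => ∑ j, S i j • ContinuousLinearMap.proj j

lemma matSmul_apply (S : Matrix (Fin d) (Fin d) ℝ) (p : Fin d → W) :
    matSmul S p = fun i => ∑ j, S i j • p j := by
  ext i
  simp [matSmul]

lemma divD_eq_sum_fderiv_apply {p : EuclideanSpace ℝ (Fin d) → Fin d → W}
    {x : EuclideanSpace ℝ (Fin d)} (hp : DifferentiableAt ℝ p x) :
    divD p x = ∑ i, fderiv ℝ p x (EuclideanSpace.single i 1) i := by
  unfold divD
  refine Finset.sum_congr rfl fun i _ => ?_
  rw [(hasFDerivAt_pi'.mp hp.hasFDerivAt i).fderiv]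
  rfl

lemma divD_matSmul_comp_matVec {S T : Matrix (Fin d) (Fin d) ℝ} (hST : S * T = 1)
    {p : EuclideanSpace ℝ (Fin d) → Fin d → W} (hp : Differentiable ℝ p)
    (x : EuclideanSpace ℝ (Fin d)) :
    divD (fun y => matSmul T (p (matVec S y))) x = divD p (matVec S x) := by
  have hq : HasFDerivAt (fun y => matSmul T (p (matVec S y)))
      ((matSmul T).comp ((fderiv ℝ p (matVec S x)).comp (matVecCLM S))) x := by
    rw [← coe_matVecCLM]
    exact (matSmul T).hasFDerivAt.comp x
      ((hp _).hasFDerivAt.comp x (matVecCLM S).hasFDerivAt)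
  set A : Fin d → Fin d → W := fun k j => fderiv ℝ p (matVec S x) (EuclideanSpace.single k 1) j
  rw [divD_eq_sum_fderiv_apply hq.differentiableAt, divD_eq_sum_fderiv_apply (hp _), hq.fderiv]
  simp only [ContinuousLinearMap.comp_apply, coe_matVecCLM, matVec_single, map_sum, map_smul,
    matSmul_apply, Finset.sum_apply, Pi.smul_apply]
  calc ∑ i, ∑ k, S k i • ∑ j, T i j • A k j
      = ∑ k, ∑ j, (S * T) k j • A k j := by
        simp only [Matrix.mul_apply, Finset.smul_sum, Finset.sum_smul, smul_smul]
        rw [Finset.sum_comm]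
        exact Finset.sum_congr rfl fun k _ => Finset.sum_comm
    _ = ∑ k, A k k := by simp [hST, Matrix.one_apply]

variable {V : Type*} [NormedAddCommGroup V] [NormedSpace ℝ V]

def IsRotationInvariant (N : (Fin d → StrongDual ℝ V) → ℝ) : Prop :=
  ∀ S : Matrix (Fin d) (Fin d) ℝ, S * Sᵀ = 1 → Sᵀ * S = 1 → S.det = 1 →
    ∀ p : Fin d → StrongDual ℝ V, N (fun i => ∑ j, S i j • p j) = N p

def tvIntegrals (N : (Fin d → StrongDual ℝ V) → ℝ) (Ω : Set (EuclideanSpace ℝ (Fin d)))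
    (u : EuclideanSpace ℝ (Fin d) → V) : Set ℝ :=
  { r : ℝ | ∃ p : EuclideanSpace ℝ (Fin d) → Fin d → StrongDual ℝ V,
    ContDiff ℝ 1 p ∧ HasCompactSupport p ∧ tsupport p ⊆ Ω ∧
    (∀ x : EuclideanSpace ℝ (Fin d), N (p x) ≤ 1) ∧
    r = ∫ x in Ω, -(divD p x (u x)) }

lemma tvIntegrals_subset_comp_matVec {N : (Fin d → StrongDual ℝ V) → ℝ}
    (hN : IsRotationInvariant N) {S : Matrix (Fin d) (Fin d) ℝ} (h1 : S * Sᵀ = 1)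
    (h2 : Sᵀ * S = 1) (h3 : S.det = 1) (Ω : Set (EuclideanSpace ℝ (Fin d)))
    (u : EuclideanSpace ℝ (Fin d) → V) :
    tvIntegrals N Ω u ⊆ tvIntegrals N (matVec S ⁻¹' Ω) (u ∘ matVec S) := by
  rintro r ⟨p, hpC, hpK, hpΩ, hpN, rfl⟩
  set e := matVecEquiv h1 h2
  have he : ⇑e = matVec S := coe_matVecEquiv h1 h2
  refine ⟨fun y => matSmul Sᵀ (p (matVec S y)), ?_, ?_, ?_, fun x => ?_, ?_⟩
  · rw [← he]
    exact (matSmul Sᵀ).contDiff.comp (hpC.comp e.contDiff)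
  · rw [← he]
    exact (hpK.comp_homeomorph e.toHomeomorph).comp_left (map_zero _)
  · rw [← he]
    exact (tsupport_comp_subset (map_zero _) _).trans
      ((tsupport_comp_subset_preimage p e.continuous).trans (Set.preimage_mono hpΩ))
  · have hrot := hN Sᵀ (by rwa [transpose_transpose]) (by rwa [transpose_transpose])
      (by rwa [det_transpose]) (p (matVec S x))
    show N (matSmul Sᵀ (p (matVec S x))) ≤ 1
    rw [matSmul_apply]
    exact hrot.le.trans (hpN _)
  · have hdiv := divD_matSmul_comp_matVec h1 (hpC.differentiable one_ne_zero)
    simp only [Function.comp_apply, hdiv]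
    exact ((measurePreserving_matVec (by rw [h3, abs_one])).setIntegral_preimage_emb
      (he ▸ e.toHomeomorph.measurableEmbedding) _ Ω).symm

lemma tvIntegrals_comp_matVec {N : (Fin d → StrongDual ℝ V) → ℝ}
    (hN : IsRotationInvariant N) {S : Matrix (Fin d) (Fin d) ℝ} (h1 : S * Sᵀ = 1)
    (h2 : Sᵀ * S = 1) (h3 : S.det = 1) (Ω : Set (EuclideanSpace ℝ (Fin d)))
    (u : EuclideanSpace ℝ (Fin d) → V) :
    tvIntegrals N (matVec S ⁻¹' Ω) (u ∘ matVec S) = tvIntegrals N Ω u := by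
  refine subset_antisymm ?_ (tvIntegrals_subset_comp_matVec hN h1 h2 h3 Ω u)
  have hid : matVec S ∘ matVec Sᵀ = id := (leftInverse_matVec h1).comp_eq_id
  have hsub := tvIntegrals_subset_comp_matVec hN (S := Sᵀ) (by rwa [transpose_transpose])
    (by rwa [transpose_transpose]) (by rwa [det_transpose]) (matVec S ⁻¹' Ω) (u ∘ matVec S)
  rwa [← Set.preimage_comp, Function.comp_assoc, hid, Set.preimage_id, Function.comp_id] at hsub

end

theorem stmt4_general {d : ℕ} (Ω : Set (EuclideanSpace ℝ (Fin d)))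
    (V : Type*) [NormedAddCommGroup V] [NormedSpace ℝ V]
    (N : (Fin d → StrongDual ℝ V) → ℝ)
    -- rotational invariance of `N`:
    (hN_rot : ∀ S : Matrix (Fin d) (Fin d) ℝ, S * Sᵀ = 1 → Sᵀ * S = 1 → S.det = 1 →
      ∀ p : Fin d → StrongDual ℝ V, N (fun i => ∑ j, S i j • p j) = N p)
    (u : EuclideanSpace ℝ (Fin d) → V)
    -- `R ∈ SO(d)`:
    (R : Matrix (Fin d) (Fin d) ℝ) (hR : R * Rᵀ = 1) (hR' : Rᵀ * R = 1) (hRdet : R.det = 1) :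
    TVb N Ω u = TVb N (matVec Rᵀ '' Ω) (fun x => u (matVec R x)) := by
  rw [Set.image_eq_preimage_of_inverse (leftInverse_matVec hR) (leftInverse_matVec hR')]
  exact congrArg sSup (tvIntegrals_comp_matVec hN_rot hR hR' hRdet Ω u).symm

/-- If the product norm `N` on `(V*)^d` is rotationally invariant, i.e.
`N(p) = N(Rp)` with `(Rp)_i = ∑ j, R_{ij} p_j` for all `R ∈ SO(d)`, then `TV_V` is
rotationally invariant: for `u ∈ L_w^∞(Ω, V)`, `R ∈ SO(d)` and `ũ(x) := u(Rx)` one has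
`TV_V(u) = TV_V(ũ)`, the latter computed over the rotated domain `R^TΩ`. -/
theorem stmt4 {d : ℕ} (Ω : Set (EuclideanSpace ℝ (Fin d)))
    (hΩo : IsOpen Ω) (hΩb : Bornology.IsBounded Ω)
    (V : Type*) [NormedAddCommGroup V] [NormedSpace ℝ V] [CompleteSpace V]
    (N : (Fin d → StrongDual ℝ V) → ℝ)
    -- `N` is a norm on `(V*)^d`:
    (hN_nonneg : ∀ p, 0 ≤ N p)
    (hN_add : ∀ p q, N (p + q) ≤ N p + N q)
    (hN_smul : ∀ (c : ℝ) p, N (c • p) = |c| * N p)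
    (hN_def : ∀ p, N p = 0 ↔ p = 0)
    -- rotational invariance of `N`:
    (hN_rot : ∀ S : Matrix (Fin d) (Fin d) ℝ, S * Sᵀ = 1 → Sᵀ * S = 1 → S.det = 1 →
      ∀ p : Fin d → StrongDual ℝ V, N (fun i => ∑ j, S i j • p j) = N p)
    -- `u ∈ L_w^∞(Ω, V)`:
    (u : EuclideanSpace ℝ (Fin d) → V)
    (hu_meas : ∀ q : StrongDual ℝ V, Measurable fun x : Ω => q (u x))
    (hu_bdd : essSup (fun x => (‖u x‖₊ : ℝ≥0∞)) (volume.restrict Ω) < ⊤)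
    -- `R ∈ SO(d)`:
    (R : Matrix (Fin d) (Fin d) ℝ) (hR : R * Rᵀ = 1) (hR' : Rᵀ * R = 1) (hRdet : R.det = 1) :
    TVb N Ω u = TVb N (matVec Rᵀ '' Ω) (fun x => u (matVec R x)) :=
  stmt4_general Ω V N hN_rot u R hR hR' hRdet
end

section
/- Let Ω ⊂ ℝ^d be open and bounded and (X,d) a compact metric space. Let u^k : Ω → P(X) (k ∈ ℕ) be weakly measurable and let u^∞ : Ω → M(X) be a weakly* measurable function into the finite signed Borel measures on X (i.e., x ↦ ∫_X f d(u^∞(x)) is measurable for all f ∈ C(X)) such that ∫_Ω φ(x) ∫_X f(z) d(u^k(x))(z) dx → ∫_Ω φ(x) ∫_X f(z) d(u^∞(x))(z) dx as k → ∞ for all φ ∈ L¹(Ω) and f ∈ C(X). Then for almost every x ∈ Ω, u^∞(x) is a nonnegative measure of total mass 1, i.e., u^∞(x) ∈ P(X) almost everywhere. -/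
/-!
Testing with `φ ≥ 0` passes `∫ f d(u^k x) ≥ 0` for `f ≥ 0`, and `∫ 1 d(u^k x) = 1`, to the limit:
for each fixed `f`, `x ↦ ∫ f d(u^∞ x)` is a.e. nonnegative, resp. a.e. equal to `1`. As `C(X)` is
separable, a countable dense set of nonnegative `f` yields one null set off which `u^∞ x`
integrates every nonnegative continuous function to a nonnegative number. Comparing on thickened
indicators, the negative part of its Jordan decomposition is then dominated by the positive part
on closed sets, hence on all Borel sets by regularity; being singular to the positive part, it
vanishes.
-/

open MeasureTheory Filter Topology

attribute [local instance] MeasureTheory.Measure.Subtype.measureSpace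

/-- The integral of `f` against a finite signed Borel measure `s`,
via the Jordan decomposition `s = s⁺ − s⁻`. -/
noncomputable def signedIntegral {X : Type*} [MeasurableSpace X]
    (s : MeasureTheory.SignedMeasure X) (f : X → ℝ) : ℝ :=
  (∫ z, f z ∂s.toJordanDecomposition.posPart) - ∫ z, f z ∂s.toJordanDecomposition.negPart

open scoped NNReal BoundedContinuousFunction

section TestFunctions

variable {α : Type*} [MeasurableSpace α] {μ : Measure α} [IsFiniteMeasure μ]

theorem ae_le_of_forall_integral_mul_le {G H : α → ℝ} (hG : Measurable G) (hH : Measurable H)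
    (h : ∀ φ : α → ℝ, Integrable φ μ → 0 ≤ φ → ∫ x, φ x * G x ∂μ ≤ ∫ x, φ x * H x ∂μ) :
    G ≤ᵐ[μ] H := by
  -- Test against the indicator of `{H < G}`, damped so that `φ * G` and `φ * H` stay bounded.
  set E := {x | H x < G x}
  set w : α → ℝ := fun x => (1 + |G x| + |H x|)⁻¹
  set φ := E.indicator w
  have hw_pos (x : α) : 0 < w x := by positivity
  have hφ_meas : Measurable φ :=
    (((measurable_const.add hG.abs).add hH.abs).inv).indicator (measurableSet_lt hH hG)
  have hφ_le (x : α) : φ x ≤ w x := Set.indicator_le_self' (fun _ _ => (hw_pos x).le) x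
  have hφ_nonneg : 0 ≤ φ := Set.indicator_nonneg fun x _ => (hw_pos x).le
  have hint {F : α → ℝ} (hF : Measurable F) (hFw : ∀ x, |F x| ≤ 1 + |G x| + |H x|) :
      Integrable (fun x => φ x * F x) μ := by
    refine .of_bound (hφ_meas.mul hF).aestronglyMeasurable 1 (ae_of_all _ fun x => ?_)
    rw [Real.norm_eq_abs, abs_mul, abs_of_nonneg (hφ_nonneg x)]
    calc φ x * |F x| ≤ w x * (1 + |G x| + |H x|) :=
          mul_le_mul (hφ_le x) (hFw x) (abs_nonneg _) (hw_pos x).le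
      _ = 1 := inv_mul_cancel₀ (by positivity)
  have hφG := hint hG fun x => by linarith [abs_nonneg (H x)]
  have hφH := hint hH fun x => by linarith [abs_nonneg (G x)]
  have hφ : Integrable φ μ := by
    have hF (x : α) : |(1 : ℝ)| ≤ 1 + |G x| + |H x| := by
      rw [abs_one]; linarith [abs_nonneg (G x), abs_nonneg (H x)]
    simpa only [mul_one] using hint measurable_const hF
  have hgap_nonneg : 0 ≤ fun x => φ x * (G x - H x) := fun x => by
    by_cases hx : x ∈ E
    · exact mul_nonneg (hφ_nonneg x) (sub_nonneg.2 hx.le)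
    · simp [φ, hx]
  have hgap_int : Integrable (fun x => φ x * (G x - H x)) μ := by
    simpa only [mul_sub] using hφG.sub' hφH
  have hgap_zero : (fun x => φ x * (G x - H x)) =ᵐ[μ] 0 := by
    refine (integral_eq_zero_iff_of_nonneg hgap_nonneg hgap_int).1 (le_antisymm ?_ ?_)
    · simpa only [mul_sub, integral_sub hφG hφH, sub_nonpos] using h φ hφ hφ_nonneg
    · exact integral_nonneg hgap_nonneg
  filter_upwards [hgap_zero] with x hx
  refine not_lt.1 fun hxE => (?_ : 0 < φ x * (G x - H x)).ne' hx
  simp only [φ, Set.indicator_of_mem (show x ∈ E from hxE)]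
  exact mul_pos (hw_pos x) (sub_pos.2 hxE)

theorem ae_eq_of_forall_integral_mul_eq {G H : α → ℝ} (hG : Measurable G) (hH : Measurable H)
    (h : ∀ φ : α → ℝ, Integrable φ μ → ∫ x, φ x * G x ∂μ = ∫ x, φ x * H x ∂μ) : G =ᵐ[μ] H :=
  (ae_le_of_forall_integral_mul_le hG hH fun φ hφ _ => (h φ hφ).le).antisymm
    (ae_le_of_forall_integral_mul_le hH hG fun φ hφ _ => (h φ hφ).ge)

theorem ae_nonneg_of_tendsto_integral_mul {ι : Type*} {l : Filter ι} [l.NeBot] {g : ι → α → ℝ}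
    {G : α → ℝ} (hG : Measurable G) (hg : ∀ i, 0 ≤ g i)
    (h : ∀ φ : α → ℝ, Integrable φ μ →
      Tendsto (fun i => ∫ x, φ x * g i x ∂μ) l (𝓝 (∫ x, φ x * G x ∂μ))) :
    0 ≤ᵐ[μ] G :=
  ae_le_of_forall_integral_mul_le measurable_const hG fun φ hφ hφ_nonneg => by
    simpa only [Pi.zero_apply, mul_zero, integral_zero] using
      ge_of_tendsto' (h φ hφ) fun i => integral_nonneg fun x => mul_nonneg (hφ_nonneg x) (hg i x)

end TestFunctions

section MetricSpace

variable {X : Type*} [PseudoEMetricSpace X] [MeasurableSpace X] [BorelSpace X]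

theorem MeasureTheory.Measure.le_of_forall_integral_le {μ ν : Measure X} [IsFiniteMeasure μ]
    [IsFiniteMeasure ν] (h : ∀ f : X →ᵇ ℝ≥0, ∫ x, (f x : ℝ) ∂μ ≤ ∫ x, (f x : ℝ) ∂ν) : μ ≤ ν := by
  have hclosed {F : Set X} (hF : IsClosed F) : μ F ≤ ν F := by
    have hδ : Tendsto (fun n : ℕ => 1 / ((n : ℝ) + 1)) atTop (𝓝 0) :=
      tendsto_one_div_add_atTop_nhds_zero_nat
    have hδ_pos (n : ℕ) : 0 < 1 / ((n : ℝ) + 1) := Nat.one_div_pos_of_nat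
    refine (ENNReal.toReal_le_toReal (measure_ne_top μ F) (measure_ne_top ν F)).1 ?_
    exact le_of_tendsto_of_tendsto'
      (tendsto_integral_thickenedIndicator_of_isClosed μ hF hδ_pos hδ)
      (tendsto_integral_thickenedIndicator_of_isClosed ν hF hδ_pos hδ) fun _ => h _
  refine Measure.le_iff.2 fun s hs => ?_
  rw [hs.measure_eq_iSup_isClosed_of_ne_top (measure_ne_top μ s)]
  exact iSup₂_le fun F hFs => iSup_le fun hF => (hclosed hF).trans (measure_mono hFs)

theorem MeasureTheory.SignedMeasure.negPart_eq_zero_of_forall_signedIntegral_nonneg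
    (s : SignedMeasure X) (h : ∀ f : X →ᵇ ℝ≥0, 0 ≤ signedIntegral s fun x => (f x : ℝ)) :
    s.toJordanDecomposition.negPart = 0 :=
  Measure.eq_zero_of_absolutelyContinuous_of_mutuallySingular
    (Measure.absolutelyContinuous_of_le
      (Measure.le_of_forall_integral_le fun f => sub_nonneg.1 (h f)))
    s.toJordanDecomposition.mutuallySingular.symm

end MetricSpace

theorem MeasureTheory.SignedMeasure.eq_toSignedMeasure_posPart {X : Type*} [MeasurableSpace X]
    {s : SignedMeasure X} (h : s.toJordanDecomposition.negPart = 0) :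
    s = s.toJordanDecomposition.posPart.toSignedMeasure := by
  conv_lhs => rw [← s.toSignedMeasure_toJordanDecomposition]
  simp [JordanDecomposition.toSignedMeasure, h]

section CompactSpace

variable {X : Type*} [TopologicalSpace X] [CompactSpace X] [MeasurableSpace X] [BorelSpace X]

theorem ContinuousMap.continuous_integral (μ : Measure X) [IsFiniteMeasure μ] :
    Continuous fun f : C(X, ℝ) => ∫ x, f x ∂μ := by
  have hint (f : C(X, ℝ)) : ∫ x, f x ∂μ = ∫ x, ContinuousMap.toLp 1 μ ℝ f x ∂μ :=
    integral_congr_ae (ContinuousMap.coeFn_toLp μ f).symm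
  simp only [hint]
  exact MeasureTheory.continuous_integral.comp (ContinuousMap.toLp 1 μ ℝ).continuous

theorem continuous_signedIntegral (s : SignedMeasure X) :
    Continuous fun f : C(X, ℝ) => signedIntegral s f :=
  (ContinuousMap.continuous_integral _).sub (ContinuousMap.continuous_integral _)

end CompactSpace

theorem stmt16_general {d : ℕ} (Ω : Set (EuclideanSpace ℝ (Fin d)))
    (hΩo : IsOpen Ω) (hΩb : Bornology.IsBounded Ω)
    (X : Type*) [MetricSpace X] [CompactSpace X] [MeasurableSpace X] [BorelSpace X]
    (u : ℕ → Ω → ProbabilityMeasure X)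
    (uinf : Ω → MeasureTheory.SignedMeasure X)
    (huinf : ∀ f : C(X, ℝ), Measurable fun x : Ω => signedIntegral (uinf x) f)
    (hconv : ∀ (φ : Ω → ℝ), Integrable φ (volume : Measure Ω) → ∀ f : C(X, ℝ),
      Tendsto (fun k => ∫ x : Ω, φ x * ∫ z, f z ∂(u k x : Measure X)) atTop
        (𝓝 (∫ x : Ω, φ x * signedIntegral (uinf x) f))) :
    ∀ᵐ x : Ω ∂(volume : Measure Ω),
      (∀ A : Set X, MeasurableSet A → 0 ≤ uinf x A) ∧ uinf x Set.univ = 1 := by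
  have : IsFiniteMeasure (volume : Measure Ω) :=
    ⟨by rw [Measure.Subtype.volume_univ hΩo.measurableSet.nullMeasurableSet]
        exact hΩb.measure_lt_top⟩
  obtain ⟨D, hD_nonneg, hD_count, hD_dense⟩ :=
    (TopologicalSpace.IsSeparable.of_separableSpace
      {f : C(X, ℝ) | 0 ≤ f}).exists_countable_dense_subset
  have hpos : ∀ᵐ x ∂(volume : Measure Ω), ∀ g ∈ D, 0 ≤ signedIntegral (uinf x) g :=
    (ae_ball_iff hD_count).2 fun g hg => ae_nonneg_of_tendsto_integral_mul (huinf g)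
      (fun _ _ => integral_nonneg (hD_nonneg hg)) fun φ hφ => hconv φ hφ g
  have hmass : ∀ᵐ x ∂(volume : Measure Ω), signedIntegral (uinf x) (1 : C(X, ℝ)) = 1 :=
    ae_eq_of_forall_integral_mul_eq (huinf 1) measurable_const fun φ hφ =>
      tendsto_nhds_unique (hconv φ hφ 1) (by simp)
  filter_upwards [hpos, hmass] with x hx_pos hx_mass
  have hneg : (uinf x).toJordanDecomposition.negPart = 0 := by
    refine SignedMeasure.negPart_eq_zero_of_forall_signedIntegral_nonneg _ fun f => ?_
    have hf : (⟨fun z => (f z : ℝ), by fun_prop⟩ : C(X, ℝ)) ∈ closure D :=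
      hD_dense fun z => (f z).2
    exact closure_minimal hx_pos (isClosed_le continuous_const (continuous_signedIntegral _)) hf
  rw [SignedMeasure.eq_toSignedMeasure_posPart hneg]
  refine ⟨fun A hA => ?_, ?_⟩
  · rw [Measure.toSignedMeasure_apply_measurable hA]
    exact measureReal_nonneg
  · simpa [signedIntegral, hneg] using hx_mass

/-- Let `u^k : Ω → P(X)` be weakly measurable and `u^∞ : Ω → M(X)` a
weakly* measurable function into the finite signed Borel measures on `X` such that
`∫_Ω φ(x) ∫_X f d(u^k x) dx → ∫_Ω φ(x) ∫_X f d(u^∞ x) dx` for all `φ ∈ L¹(Ω)` and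
`f ∈ C(X)`. Then for a.e. `x ∈ Ω`, `u^∞ x` is a nonnegative measure of total mass `1`,
i.e. `u^∞ x ∈ P(X)` almost everywhere. -/
theorem stmt16 {d : ℕ} (Ω : Set (EuclideanSpace ℝ (Fin d)))
    (hΩo : IsOpen Ω) (hΩb : Bornology.IsBounded Ω)
    (X : Type*) [MetricSpace X] [CompactSpace X] [MeasurableSpace X] [BorelSpace X]
    (u : ℕ → Ω → ProbabilityMeasure X)
    (hu : ∀ (k : ℕ) (f : C(X, ℝ)), Measurable fun x : Ω => ∫ z, f z ∂(u k x : Measure X))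
    (uinf : Ω → MeasureTheory.SignedMeasure X)
    (huinf : ∀ f : C(X, ℝ), Measurable fun x : Ω => signedIntegral (uinf x) f)
    (hconv : ∀ (φ : Ω → ℝ), Integrable φ (volume : Measure Ω) → ∀ f : C(X, ℝ),
      Tendsto (fun k => ∫ x : Ω, φ x * ∫ z, f z ∂(u k x : Measure X)) atTop
        (𝓝 (∫ x : Ω, φ x * signedIntegral (uinf x) f))) :
    ∀ᵐ x : Ω ∂(volume : Measure Ω),
      (∀ A : Set X, MeasurableSet A → 0 ≤ uinf x A) ∧ uinf x Set.univ = 1 :=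
  stmt16_general Ω hΩo hΩb X u uinf huinf hconv
end
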